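/- Define the 2×2 matrices P₀ = I, P₁ = X, P₂ = Z, P₃ = XZ and T = (1/√2)[[1, −i],[1, i]]. Let U_P = Σ_{i<4} P_i ⊗ (H₄|i⟩⟨i|H₄†) ⊗ I₃ and U_T = Σ_{t<3} T^t ⊗ I₄ ⊗ (H₃|t⟩⟨t|H₃†), which are unitaries on ℂ²⊗ℂ⁴⊗ℂ³, and set W = U_P U_T. Then for every linear map E on M₂(ℂ) and every ρ ∈ M₂(ℂ), tr_{2,3}[ W† · ((E ⊗ id ⊗ id)( W (ρ ⊗ |0⟩⟨0| ⊗ |0⟩⟨0|) W† )) · W ] = (1/12) Σ_{t<3} Σ_{i<4} (P_i T^t)† · E( (P_i T^t) ρ (P_i T^t)† ) · (P_i T^t); i.e., the circuit realizes the uniform twirl of E by the twelve unitaries {P_i T^t : i < 4, t < 3}. -/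

import Mathlib

open Matrix
open scoped Kronecker BigOperators

/-- The `d × d` Fourier matrix, with entries `e^{2πi jk/d}/√d`. -/
noncomputable def fourierMat (d : ℕ) : Matrix (Fin d) (Fin d) ℂ :=
  Matrix.of fun j k : Fin d =>
    Complex.exp (2 * Real.pi * Complex.I * (j : ℕ) * (k : ℕ) / d) / (Real.sqrt d : ℂ)

/-- The Pauli matrix `X`. -/
noncomputable def pauliX : Matrix (Fin 2) (Fin 2) ℂ := !![0, 1; 1, 0]

/-- The Pauli matrix `Z`. -/
noncomputable def pauliZ : Matrix (Fin 2) (Fin 2) ℂ := !![1, 0; 0, -1]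

/-- The list of Pauli elements `P₀ = I`, `P₁ = X`, `P₂ = Z`, `P₃ = XZ`. -/
noncomputable def pauli : Fin 4 → Matrix (Fin 2) (Fin 2) ℂ :=
  ![1, pauliX, pauliZ, pauliX * pauliZ]

/-- The gate `T = (1/√2)[[1, −i],[1, i]]`. -/
noncomputable def gateT : Matrix (Fin 2) (Fin 2) ℂ :=
  ((Real.sqrt 2 : ℂ))⁻¹ • !![1, -Complex.I; 1, Complex.I]

/-- The action of `E ⊗ id ⊗ id` on `M₂(ℂ) ⊗ M₄(ℂ) ⊗ M₃(ℂ)`, acting as `E`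
on the first tensor factor and as the identity on the other two. -/
noncomputable def tensorMap3
    (E : Matrix (Fin 2) (Fin 2) ℂ →ₗ[ℂ] Matrix (Fin 2) (Fin 2) ℂ)
    (M : Matrix ((Fin 2 × Fin 4) × Fin 3) ((Fin 2 × Fin 4) × Fin 3) ℂ) :
    Matrix ((Fin 2 × Fin 4) × Fin 3) ((Fin 2 × Fin 4) × Fin 3) ℂ :=
  Matrix.of fun p q =>
    E (Matrix.of fun a b => M ((a, p.1.2), p.2) ((b, q.1.2), q.2)) p.1.1 q.1.1

/-- Partial trace over the second and third tensor factors. -/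
noncomputable def ptrace23
    (M : Matrix ((Fin 2 × Fin 4) × Fin 3) ((Fin 2 × Fin 4) × Fin 3) ℂ) :
    Matrix (Fin 2) (Fin 2) ℂ :=
  Matrix.of fun a b => ∑ m : Fin 4, ∑ n : Fin 3, M ((a, m), n) ((b, m), n)

/-! The columns `fᵢ` of the Fourier matrix form an orthonormal basis and `|0⟩` is their uniform
superposition, so `W = ∑ᵢₜ Vᵢₜ ⊗ |fᵢ⟩⟨fᵢ| ⊗ |fₜ⟩⟨fₜ|` with `Vᵢₜ = Pᵢ Tᵗ` sends
`ρ ⊗ |0⟩⟨0| ⊗ |0⟩⟨0|` to `(1/12) ∑ Vᵢₜ ρ V_{i't'}† ⊗ |fᵢ⟩⟨f_{i'}| ⊗ |fₜ⟩⟨f_{t'}|`.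
Since `E` acts on the first factor only, conjugating back by `W` turns each term into
`Vᵢₜ† E(Vᵢₜ ρ V_{i't'}†) V_{i't'} ⊗ |fᵢ⟩⟨f_{i'}| ⊗ |fₜ⟩⟨f_{t'}|`, and the partial trace keeps
exactly the diagonal terms `i = i'`, `t = t'`. -/

lemma geom_sum_eq_zero_of_pow_eq_one {R : Type*} [CommRing R] [IsDomain R] {ω : R} {d : ℕ}
    (hω : ω ^ d = 1) (hω₁ : ω ≠ 1) : ∑ l ∈ Finset.range d, ω ^ l = 0 := by
  refine eq_zero_of_ne_zero_of_mul_left_eq_zero (sub_ne_zero_of_ne hω₁.symm) ?_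
  rw [mul_neg_geom_sum, hω, sub_self]

lemma ofReal_sqrt_natCast_mul_self (d : ℕ) : (Real.sqrt d : ℂ) * Real.sqrt d = d := by
  rw [← Complex.ofReal_mul, Real.mul_self_sqrt (Nat.cast_nonneg d), Complex.ofReal_natCast]

lemma fourierMat_apply {d : ℕ} (j k : Fin d) :
    fourierMat d j k =
      Complex.exp (2 * Real.pi * Complex.I / d) ^ ((j : ℕ) * k) / (Real.sqrt d : ℂ) := by
  rw [fourierMat, of_apply, ← Complex.exp_nat_mul]
  congr 2
  push_cast
  ring

section Fourier

variable {d : ℕ} [NeZero d]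

lemma fourierMat_zero_apply (k : Fin d) : fourierMat d 0 k = ((Real.sqrt d : ℂ))⁻¹ := by
  simp [fourierMat]

lemma fourierMat_mul_conjTranspose : fourierMat d * (fourierMat d)ᴴ = 1 := by
  set ζ := Complex.exp (2 * Real.pi * Complex.I / d)
  have hζ : IsPrimitiveRoot ζ d := Complex.isPrimitiveRoot_exp d (NeZero.ne d)
  have hζ₀ : ζ ≠ 0 := hζ.ne_zero (NeZero.ne d)
  have hstar : star ζ = ζ⁻¹ := (Complex.inv_eq_conj (hζ.norm'_eq_one (NeZero.ne d))).symm
  have hsqrt : (Real.sqrt d : ℂ) * star (Real.sqrt d : ℂ) = d := by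
    rw [Complex.star_def, Complex.conj_ofReal, ofReal_sqrt_natCast_mul_self]
  ext j k
  -- entry `(j, k)` is the geometric sum of `ω`, a `d`-th root of unity that is `1` iff `j = k`
  set ω := ζ ^ ((j : ℤ) - k)
  have hterm (l : Fin d) : fourierMat d j l * star (fourierMat d k l) = ω ^ (l : ℕ) / d := by
    rw [fourierMat_apply, fourierMat_apply, star_div₀, star_pow, hstar, div_mul_div_comm, hsqrt,
      ← zpow_natCast, ← zpow_natCast, ← zpow_natCast, ← _root_.zpow_mul, _root_.inv_zpow']
    change ζ ^ _ * ζ ^ _ / _ = _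
    rw [← zpow_add₀ hζ₀]
    congr 2
    push_cast
    ring
  have hωd : ω ^ d = 1 := by
    rw [← zpow_natCast, ← _root_.zpow_mul, mul_comm, _root_.zpow_mul, zpow_natCast,
      hζ.pow_eq_one, _root_.one_zpow]
  have hω₁ : ω = 1 ↔ j = k := by
    rw [hζ.zpow_eq_one_iff_dvd, ← Fin.val_inj]
    refine ⟨fun h => ?_, fun h => by simp [h]⟩
    have := Int.eq_zero_of_abs_lt_dvd h (abs_sub_lt_of_nonneg_of_lt (by positivity)
      (by exact_mod_cast j.isLt) (by positivity) (by exact_mod_cast k.isLt))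
    omega
  simp only [mul_apply, conjTranspose_apply, hterm, ← Finset.sum_div, Fin.sum_univ_eq_sum_range
    (fun l => ω ^ l), one_apply]
  by_cases hjk : j = k
  · simp [hω₁.mpr hjk, hjk]
  · rw [geom_sum_eq_zero_of_pow_eq_one hωd (hω₁.not.mpr hjk)]
    simp [hjk]

lemma fourierMat_conjTranspose_mul : (fourierMat d)ᴴ * fourierMat d = 1 :=
  mul_eq_one_comm.mp fourierMat_mul_conjTranspose

end Fourier

section Kronecker

variable {ι l m n p α : Type*} [CommSemiring α]

lemma kronecker_sum (A : Matrix l m α) (s : Finset ι) (B : ι → Matrix n p α) :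
    A ⊗ₖ ∑ x ∈ s, B x = ∑ x ∈ s, A ⊗ₖ B x := by
  ext; simp [Matrix.sum_apply, Finset.mul_sum]

lemma sum_kronecker (s : Finset ι) (A : ι → Matrix l m α) (B : Matrix n p α) :
    (∑ x ∈ s, A x) ⊗ₖ B = ∑ x ∈ s, A x ⊗ₖ B := by
  ext; simp [Matrix.sum_apply, Finset.sum_mul]

lemma ite_kronecker (P : Prop) [Decidable P] (A : Matrix l m α) (B : Matrix n p α) :
    (if P then A else 0) ⊗ₖ B = if P then A ⊗ₖ B else 0 := by
  split_ifs <;> simp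

lemma kronecker_ite (P : Prop) [Decidable P] (A : Matrix l m α) (B : Matrix n p α) :
    A ⊗ₖ (if P then B else 0) = if P then A ⊗ₖ B else 0 := by
  split_ifs <;> simp

end Kronecker

section BasisUnit

variable {n α : Type*} [Fintype n] [DecidableEq n] [CommSemiring α] [StarRing α]

/-- The matrix unit `|uᵢ⟩⟨uⱼ|` of the basis formed by the columns `uᵢ` of `U`. -/
def basisUnit (U : Matrix n n α) (i j : n) : Matrix n n α := U * single i j 1 * Uᴴ

lemma conjTranspose_basisUnit (U : Matrix n n α) (i j : n) :
    (basisUnit U i j)ᴴ = basisUnit U j i := by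
  simp [basisUnit, conjTranspose_mul, Matrix.mul_assoc]

lemma basisUnit_mul_basisUnit {U : Matrix n n α} (hU : Uᴴ * U = 1) (i j k l : n) :
    basisUnit U i j * basisUnit U k l = if j = k then basisUnit U i l else 0 := by
  calc basisUnit U i j * basisUnit U k l
        = U * (single i j 1 * (Uᴴ * U) * single k l 1) * Uᴴ := by
        simp only [basisUnit, Matrix.mul_assoc]
    _ = _ := by
        rw [hU, Matrix.mul_one]
        split_ifs with h
        · rw [h, single_mul_single_same, one_mul, basisUnit]
        · rw [single_mul_single_of_ne (h := h), Matrix.mul_zero, Matrix.zero_mul]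

lemma trace_basisUnit {U : Matrix n n α} (hU : Uᴴ * U = 1) (i j : n) :
    trace (basisUnit U i j) = if i = j then 1 else 0 := by
  rw [basisUnit, trace_mul_cycle, hU, Matrix.one_mul]
  split_ifs with h
  · rw [h, trace_single_eq_same]
  · exact trace_single_eq_of_ne _ _ _ h

end BasisUnit

variable {d : ℕ} [NeZero d] in
lemma single_zero_eq_sum_basisUnit :
    single (0 : Fin d) 0 1 = (d : ℂ)⁻¹ • ∑ i, ∑ j, basisUnit (fourierMat d) i j := by
  have hmid :
      (fourierMat d)ᴴ * single 0 0 1 * fourierMat d = (d : ℂ)⁻¹ • ∑ i, ∑ j, single i j 1 := by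
    rw [show ∑ i : Fin d, ∑ j : Fin d, single i j (1 : ℂ) = of fun _ _ => 1 from
      (matrix_eq_sum_single _).symm]
    ext i j
    simp [Matrix.mul_apply, Matrix.single_apply, ite_and, fourierMat_zero_apply, ← mul_inv,
      ofReal_sqrt_natCast_mul_self]
  calc single (0 : Fin d) 0 1
      = fourierMat d * ((fourierMat d)ᴴ * single 0 0 1 * fourierMat d) * (fourierMat d)ᴴ := by
        simp only [← Matrix.mul_assoc, fourierMat_mul_conjTranspose, Matrix.one_mul]
        rw [Matrix.mul_assoc, fourierMat_mul_conjTranspose, Matrix.mul_one]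
    _ = _ := by
        simp only [hmid, basisUnit, Matrix.mul_smul, Matrix.smul_mul, Matrix.mul_sum,
          Matrix.sum_mul]

section FourierControlled

variable {κ : Type*} {m n : ℕ}

noncomputable def fourierControlled (V : Fin m → Fin n → Matrix κ κ ℂ) :
    Matrix ((κ × Fin m) × Fin n) ((κ × Fin m) × Fin n) ℂ :=
  ∑ i, ∑ t, V i t ⊗ₖ basisUnit (fourierMat m) i i ⊗ₖ basisUnit (fourierMat n) t t

lemma sum_kronecker_mul_sum_kronecker [Fintype κ] (A : Fin m → Matrix κ κ ℂ)
    (B : Fin n → Matrix κ κ ℂ) :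
    (∑ i, A i ⊗ₖ basisUnit (fourierMat m) i i ⊗ₖ (1 : Matrix (Fin n) (Fin n) ℂ)) *
        (∑ t, B t ⊗ₖ (1 : Matrix (Fin m) (Fin m) ℂ) ⊗ₖ basisUnit (fourierMat n) t t) =
      fourierControlled fun i t => A i * B t := by
  simp only [fourierControlled, Finset.sum_mul_sum, ← mul_kronecker_mul, Matrix.mul_one,
    Matrix.one_mul]

lemma conjTranspose_fourierControlled (V : Fin m → Fin n → Matrix κ κ ℂ) :
    (fourierControlled V)ᴴ = fourierControlled fun i t => (V i t)ᴴ := by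
  simp only [fourierControlled, conjTranspose_sum, conjTranspose_kronecker,
    conjTranspose_basisUnit]

variable [Fintype κ] [NeZero m] [NeZero n]

lemma fourierControlled_mul_kronecker (V : Fin m → Fin n → Matrix κ κ ℂ) (B : Matrix κ κ ℂ)
    (i i' : Fin m) (t t' : Fin n) :
    fourierControlled V * (B ⊗ₖ basisUnit (fourierMat m) i i' ⊗ₖ basisUnit (fourierMat n) t t') =
      (V i t * B) ⊗ₖ basisUnit (fourierMat m) i i' ⊗ₖ basisUnit (fourierMat n) t t' := by
  simp [fourierControlled, Matrix.sum_mul, ← mul_kronecker_mul,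
    basisUnit_mul_basisUnit fourierMat_conjTranspose_mul, ite_kronecker, kronecker_ite]

lemma kronecker_mul_fourierControlled (V : Fin m → Fin n → Matrix κ κ ℂ) (B : Matrix κ κ ℂ)
    (i i' : Fin m) (t t' : Fin n) :
    (B ⊗ₖ basisUnit (fourierMat m) i i' ⊗ₖ basisUnit (fourierMat n) t t') * fourierControlled V =
      (B * V i' t') ⊗ₖ basisUnit (fourierMat m) i i' ⊗ₖ basisUnit (fourierMat n) t t' := by
  simp [fourierControlled, Matrix.mul_sum, ← mul_kronecker_mul,
    basisUnit_mul_basisUnit fourierMat_conjTranspose_mul, ite_kronecker, kronecker_ite]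

lemma fourierControlled_conj_kronecker_single (V : Fin m → Fin n → Matrix κ κ ℂ)
    (ρ : Matrix κ κ ℂ) :
    fourierControlled V * (ρ ⊗ₖ single 0 0 1 ⊗ₖ single 0 0 1) * (fourierControlled V)ᴴ =
      ((m * n : ℕ) : ℂ)⁻¹ • ∑ t, ∑ t', ∑ i, ∑ i', (V i t * ρ * (V i' t')ᴴ) ⊗ₖ
        basisUnit (fourierMat m) i i' ⊗ₖ basisUnit (fourierMat n) t t' := by
  simp only [single_zero_eq_sum_basisUnit, kronecker_smul, smul_kronecker, kronecker_sum,
    sum_kronecker, Matrix.mul_smul, Matrix.smul_mul, Matrix.mul_sum, Matrix.sum_mul,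
    fourierControlled_mul_kronecker, conjTranspose_fourierControlled,
    kronecker_mul_fourierControlled, ← Finset.smul_sum, smul_smul]
  push_cast
  rw [mul_inv, mul_comm]

end FourierControlled

section Readout

local notation "Mat" => Matrix ((Fin 2 × Fin 4) × Fin 3) ((Fin 2 × Fin 4) × Fin 3) ℂ

noncomputable def tensorMap3ₗ (E : Matrix (Fin 2) (Fin 2) ℂ →ₗ[ℂ] Matrix (Fin 2) (Fin 2) ℂ) :
    Mat →ₗ[ℂ] Mat where
  toFun := tensorMap3 E
  map_add' M N := by
    ext p q
    rw [Matrix.add_apply]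
    simp only [tensorMap3, of_apply]
    rw [← Matrix.add_apply, ← map_add]
    rfl
  map_smul' c M := by
    ext p q
    rw [Matrix.smul_apply]
    simp only [tensorMap3, of_apply]
    rw [← Matrix.smul_apply, ← map_smul]
    rfl

noncomputable def ptrace23ₗ : Mat →ₗ[ℂ] Matrix (Fin 2) (Fin 2) ℂ where
  toFun := ptrace23
  map_add' M N := by ext; simp [ptrace23, Finset.sum_add_distrib]
  map_smul' c M := by ext; simp [ptrace23, Finset.mul_sum]

lemma tensorMap3_kronecker (E : Matrix (Fin 2) (Fin 2) ℂ →ₗ[ℂ] Matrix (Fin 2) (Fin 2) ℂ)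
    (A : Matrix (Fin 2) (Fin 2) ℂ) (B : Matrix (Fin 4) (Fin 4) ℂ) (C : Matrix (Fin 3) (Fin 3) ℂ) :
    tensorMap3 E (A ⊗ₖ B ⊗ₖ C) = E A ⊗ₖ B ⊗ₖ C := by
  ext ⟨⟨a, j⟩, t⟩ ⟨⟨b, j'⟩, t'⟩
  have hblock :
      (of fun x y => (A ⊗ₖ B ⊗ₖ C) ((x, j), t) ((y, j'), t')) = (B j j' * C t t') • A := by
    ext; simp [mul_comm, mul_left_comm]
  change E (of fun x y => (A ⊗ₖ B ⊗ₖ C) ((x, j), t) ((y, j'), t')) a b = _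
  rw [hblock, map_smul, Matrix.smul_apply, smul_eq_mul]
  simp only [kroneckerMap_apply]
  ring

lemma ptrace23_kronecker (A : Matrix (Fin 2) (Fin 2) ℂ) (B : Matrix (Fin 4) (Fin 4) ℂ)
    (C : Matrix (Fin 3) (Fin 3) ℂ) :
    ptrace23 (A ⊗ₖ B ⊗ₖ C) = (trace B * trace C) • A := by
  ext
  simp [ptrace23, trace, Finset.mul_sum, mul_comm, mul_left_comm]

noncomputable def readout (E : Matrix (Fin 2) (Fin 2) ℂ →ₗ[ℂ] Matrix (Fin 2) (Fin 2) ℂ)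
    (W : Mat) : Mat →ₗ[ℂ] Matrix (Fin 2) (Fin 2) ℂ :=
  ptrace23ₗ ∘ₗ LinearMap.mulRight ℂ W ∘ₗ LinearMap.mulLeft ℂ Wᴴ ∘ₗ tensorMap3ₗ E

lemma readout_fourierControlled_kronecker
    (E : Matrix (Fin 2) (Fin 2) ℂ →ₗ[ℂ] Matrix (Fin 2) (Fin 2) ℂ)
    (V : Fin 4 → Fin 3 → Matrix (Fin 2) (Fin 2) ℂ) (A : Matrix (Fin 2) (Fin 2) ℂ)
    (i i' : Fin 4) (t t' : Fin 3) :
    readout E (fourierControlled V)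
        (A ⊗ₖ basisUnit (fourierMat 4) i i' ⊗ₖ basisUnit (fourierMat 3) t t') =
      if i = i' ∧ t = t' then (V i t)ᴴ * E A * V i t else 0 := by
  simp only [readout, LinearMap.comp_apply, tensorMap3ₗ, ptrace23ₗ, LinearMap.coe_mk,
    AddHom.coe_mk, LinearMap.mulLeft_apply, LinearMap.mulRight_apply, tensorMap3_kronecker,
    conjTranspose_fourierControlled, fourierControlled_mul_kronecker,
    kronecker_mul_fourierControlled, ptrace23_kronecker,
    trace_basisUnit fourierMat_conjTranspose_mul]
  split_ifs <;> simp_all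

end Readout

theorem stmt3
    (UP UT W : Matrix ((Fin 2 × Fin 4) × Fin 3) ((Fin 2 × Fin 4) × Fin 3) ℂ)
    (hUP : UP = ∑ i : Fin 4,
      (pauli i) ⊗ₖ (fourierMat 4 * Matrix.single i i 1 * (fourierMat 4)ᴴ) ⊗ₖ
        (1 : Matrix (Fin 3) (Fin 3) ℂ))
    (hUT : UT = ∑ t : Fin 3,
      (gateT ^ (t : ℕ)) ⊗ₖ (1 : Matrix (Fin 4) (Fin 4) ℂ) ⊗ₖ
        (fourierMat 3 * Matrix.single t t 1 * (fourierMat 3)ᴴ))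
    (hW : W = UP * UT)
    (E : Matrix (Fin 2) (Fin 2) ℂ →ₗ[ℂ] Matrix (Fin 2) (Fin 2) ℂ)
    (ρ : Matrix (Fin 2) (Fin 2) ℂ) :
    ptrace23
      (Wᴴ * tensorMap3 E
        (W * (ρ ⊗ₖ Matrix.single (0 : Fin 4) (0 : Fin 4) 1 ⊗ₖ
                Matrix.single (0 : Fin 3) (0 : Fin 3) 1) * Wᴴ) * W)
      = (1 / 12 : ℂ) •
          ∑ t : Fin 3, ∑ i : Fin 4,
            (pauli i * gateT ^ (t : ℕ))ᴴ *
              E ((pauli i * gateT ^ (t : ℕ)) * ρ * (pauli i * gateT ^ (t : ℕ))ᴴ) *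
              (pauli i * gateT ^ (t : ℕ)) := by
  have hW' : W = fourierControlled fun i t => pauli i * gateT ^ (t : ℕ) := by
    rw [hW, hUP, hUT]
    exact sum_kronecker_mul_sum_kronecker _ _
  subst hW'
  change readout E _ (_ * _ * _) = _
  rw [fourierControlled_conj_kronecker_single, map_smul, map_sum]
  simp [readout_fourierControlled_kronecker, ite_and]
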